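/- Let p ≥ 1 be a real number, φ = π/(2p + 2), s = sin φ, and s_j = sin(jφ) for integers j. For integers r ≥ 1 define the 2×2 real matrices A_r = [[0, −s/s_{r+1}], [0, 0]], B_r = [[−s_{r+1}/s_r, 0], [0, −s_r/s_{r+1}]], D_r = [[0, 0], [s/s_r, 0]], P⁺_r = [[1, 0], [0, s_r/s_{r+1}]], P⁻_r = [[−s_{r+1}/s_r, 0], [0, −1]], and the diagonal matrix g_r = [[s_{r+1}, 0], [0, s_r]]. Then for every integer r with 1 ≤ r ≤ 2p − 1: g_r is positive definite, g_r·A_r = −(D_r)ᵀ·g_r, g_r·B_r = (B_r)ᵀ·g_r, and g_{r+1}·P⁺_r = −(P⁻_{r+1})ᵀ·g_r. -/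
import Mathlib


open Matrix

/-- `s_j = sin (j·φ)` with `φ = π/(2p+2)`. -/
noncomputable def sj (p : ℝ) (j : ℕ) : ℝ := Real.sin (j * (Real.pi / (2 * p + 2)))

noncomputable def trigA (p : ℝ) (r : ℕ) : Matrix (Fin 2) (Fin 2) ℝ :=
  !![0, -(sj p 1) / sj p (r + 1); 0, 0]

noncomputable def trigB (p : ℝ) (r : ℕ) : Matrix (Fin 2) (Fin 2) ℝ :=
  !![-(sj p (r + 1)) / sj p r, 0; 0, -(sj p r) / sj p (r + 1)]

noncomputable def trigD (p : ℝ) (r : ℕ) : Matrix (Fin 2) (Fin 2) ℝ :=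
  !![0, 0; sj p 1 / sj p r, 0]

noncomputable def trigPp (p : ℝ) (r : ℕ) : Matrix (Fin 2) (Fin 2) ℝ :=
  !![1, 0; 0, sj p r / sj p (r + 1)]

noncomputable def trigPm (p : ℝ) (r : ℕ) : Matrix (Fin 2) (Fin 2) ℝ :=
  !![-(sj p (r + 1)) / sj p r, 0; 0, -1]

noncomputable def trigG (p : ℝ) (r : ℕ) : Matrix (Fin 2) (Fin 2) ℝ :=
  !![sj p (r + 1), 0; 0, sj p r]

lemma sj_pos (p : ℝ) (hp : 1 ≤ p) (j : ℕ) (h1 : 1 ≤ j) (h2 : (j : ℝ) ≤ 2 * p + 1) :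
    0 < sj p j := by
  have hpi := Real.pi_pos
  have hden : (0:ℝ) < 2 * p + 2 := by linarith
  apply Real.sin_pos_of_pos_of_lt_pi
  · have : (1:ℝ) ≤ (j:ℝ) := by exact_mod_cast h1
    positivity
  · have hj : (j:ℝ) < 2 * p + 2 := by linarith
    calc (j:ℝ) * (Real.pi / (2 * p + 2)) < (2 * p + 2) * (Real.pi / (2 * p + 2)) :=
          mul_lt_mul_of_pos_right hj (div_pos hpi hden)
      _ = Real.pi := by field_simp

theorem stmt18 (p : ℝ) (hp : 1 ≤ p) :
    ∀ r : ℕ, 1 ≤ r → (r : ℝ) ≤ 2 * p - 1 →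
      (trigG p r).PosDef ∧
      trigG p r * trigA p r = -(trigD p r)ᵀ * trigG p r ∧
      trigG p r * trigB p r = (trigB p r)ᵀ * trigG p r ∧
      trigG p (r + 1) * trigPp p r = -(trigPm p (r + 1))ᵀ * trigG p r := by
  intro r hr hr2
  have h1 : 0 < sj p r := sj_pos p hp r hr (by linarith)
  have h2 : 0 < sj p (r + 1) := sj_pos p hp (r + 1) (by omega) (by push_cast; linarith)
  have h3 : 0 < sj p (r + 2) := sj_pos p hp (r + 2) (by omega) (by push_cast; linarith)
  refine ⟨?_, ?_, ?_, ?_⟩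
  · have : trigG p r = Matrix.diagonal ![sj p (r+1), sj p r] := by
      ext i j
      fin_cases i <;> fin_cases j <;> simp [trigG, Matrix.diagonal]
    rw [this, Matrix.posDef_diagonal_iff]
    intro i; fin_cases i <;> simpa
  · ext i j
    fin_cases i <;> fin_cases j <;>
      simp [trigG, trigA, trigD, Matrix.mul_apply, Matrix.transpose_apply, Fin.sum_univ_two, Matrix.vecHead, Matrix.vecTail, Matrix.cons_val_zero, Matrix.cons_val_one] <;>
      field_simp <;> ring
  · ext i j
    fin_cases i <;> fin_cases j <;>
      simp [trigG, trigB, Matrix.mul_apply, Matrix.transpose_apply, Fin.sum_univ_two, Matrix.vecHead, Matrix.vecTail, Matrix.cons_val_zero, Matrix.cons_val_one] <;>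
      field_simp <;> ring
  · ext i j
    fin_cases i <;> fin_cases j <;>
      simp [trigG, trigPp, trigPm, Matrix.mul_apply, Matrix.transpose_apply, Fin.sum_univ_two, Matrix.vecHead, Matrix.vecTail, Matrix.cons_val_zero, Matrix.cons_val_one] <;>
      field_simp <;> ring
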